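/- For every real number z with 0 < z < 1, it holds that (3z/4)·(4 − 8z² + 5z³) + (3 − 2z − 2z³ + 2z⁴)·ln( (1 − z) / (1 − z³)² ) > 0. -/

import Mathlib

/-!
With `u = (1 - z)(1 + z + z²)²` the logarithm in the statement is `-log u`, and `log u` lies
below its third-order Taylor polynomial at `1` for every `u > 0` (the difference has derivative
`(u - 1)³ / u`). The left-hand side is only `z² / 2 + O(z³)`, so a bound exact to second order
in `z` is needed, and this one is, since `u - 1 = z + O(z²)`. Substituting it leaves a
polynomial inequality on `[0, 1]`.
-/

open Real Set

noncomputable def cubicLogBound (x : ℝ) : ℝ := (x - 1) - (x - 1) ^ 2 / 2 + (x - 1) ^ 3 / 3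

lemma hasDerivAt_cubicLogBound_sub_log {x : ℝ} (hx : 0 < x) :
    HasDerivAt (fun y ↦ cubicLogBound y - log y) ((x - 1) ^ 3 / x) x := by
  have hderiv := (((((hasDerivAt_id' x).sub_const 1).sub
    ((((hasDerivAt_id' x).sub_const 1).pow 2).div_const 2)).add
      ((((hasDerivAt_id' x).sub_const 1).pow 3).div_const 3)).sub (hasDerivAt_log hx.ne'))
  refine hderiv.congr_deriv ?_
  field_simp
  ring

lemma log_le_cubicLogBound {x : ℝ} (hx : 0 < x) : log x ≤ cubicLogBound x := by
  set f : ℝ → ℝ := fun y ↦ cubicLogBound y - log y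
  have hcont : ContinuousOn f (Ioi 0) := fun y hy ↦
    (hasDerivAt_cubicLogBound_sub_log hy).continuousAt.continuousWithinAt
  suffices f 1 ≤ f x by simpa [f, cubicLogBound] using this
  rcases le_total 1 x with h | h
  · refine monotoneOn_of_hasDerivWithinAt_nonneg (f' := fun y ↦ (y - 1) ^ 3 / y) (convex_Ici 1)
      (hcont.mono (Ici_subset_Ioi.2 one_pos)) (fun y hy ↦ ?_) (fun y hy ↦ ?_) self_mem_Ici h h
    all_goals rw [interior_Ici, mem_Ioi] at hy
    · exact (hasDerivAt_cubicLogBound_sub_log (by linarith)).hasDerivWithinAt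
    · exact div_nonneg (pow_nonneg (by linarith) 3) (by linarith)
  · refine antitoneOn_of_hasDerivWithinAt_nonpos (f' := fun y ↦ (y - 1) ^ 3 / y) (convex_Ioc 0 1)
      (hcont.mono Ioc_subset_Ioi_self) (fun y hy ↦ ?_) (fun y hy ↦ ?_) ⟨hx, h⟩
      (right_mem_Ioc.2 one_pos) h
    all_goals rw [interior_Ioc] at hy
    · exact (hasDerivAt_cubicLogBound_sub_log hy.1).hasDerivWithinAt
    · exact div_nonpos_of_nonpos_of_nonneg (Odd.pow_nonpos (by decide) (by linarith [hy.2]))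
        hy.1.le

lemma sq_div_two_le_sub_mul_cubicLogBound {z : ℝ} (hz0 : 0 ≤ z) (hz1 : z ≤ 1) :
    z ^ 2 / 2 ≤ (3 * z / 4) * (4 - 8 * z ^ 2 + 5 * z ^ 3)
      - (3 - 2 * z - 2 * z ^ 3 + 2 * z ^ 4) * cubicLogBound ((1 - z) * (1 + z + z ^ 2) ^ 2) := by
  have hbasis : ∀ i j : ℕ, 0 ≤ z ^ 2 * (z ^ i * (1 - z) ^ j) := fun i j ↦ by
    have : 0 ≤ 1 - z := by linarith
    positivity
  unfold cubicLogBound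
  -- The difference of the two sides is `z²` times a polynomial of degree 17 whose Bernstein
  -- coefficients are all at least `1 / 2`, with equality for the first two.
  linarith [hbasis 2 15, hbasis 3 14, hbasis 4 13, hbasis 5 12, hbasis 6 11, hbasis 7 10,
    hbasis 8 9, hbasis 9 8, hbasis 10 7, hbasis 11 6, hbasis 12 5, hbasis 13 4, hbasis 14 3,
    hbasis 15 2, hbasis 16 1, hbasis 17 0]

lemma one_sub_div_one_sub_cube_sq {z : ℝ} (hz : z ≠ 1) :
    (1 - z) / (1 - z ^ 3) ^ 2 = ((1 - z) * (1 + z + z ^ 2) ^ 2)⁻¹ := by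
  have h : 1 - z ≠ 0 := sub_ne_zero.2 hz.symm
  rw [show (1 - z ^ 3) ^ 2 = (1 - z) * ((1 - z) * (1 + z + z ^ 2) ^ 2) by ring,
    div_mul_cancel_left₀ h]

theorem stmt_4 (z : ℝ) (hz0 : 0 < z) (hz1 : z < 1) :
    (3*z/4) * (4 - 8*z^2 + 5*z^3)
      + (3 - 2*z - 2*z^3 + 2*z^4) * Real.log ((1 - z) / (1 - z^3)^2) > 0 := by
  have hu : 0 < (1 - z) * (1 + z + z ^ 2) ^ 2 := by
    have : 0 < 1 - z := by linarith
    positivity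
  have hg : 0 ≤ 3 - 2 * z - 2 * z ^ 3 + 2 * z ^ 4 := by
    nlinarith [pow_le_one₀ hz0.le hz1.le (n := 3)]
  rw [one_sub_div_one_sub_cube_sq hz1.ne, log_inv]
  linarith [mul_le_mul_of_nonneg_left (log_le_cubicLogBound hu) hg,
    sq_div_two_le_sub_mul_cubicLogBound hz0.le hz1.le, pow_pos hz0 2]
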